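/- Let D, a, a₁ be positive integers and let b be an even integer with b² ≡ −1 (mod D·a²·a₁). Write E(m,n) = (−1)^m·exp(π(mni − |nDaa₁ − m(b+i)|²/(2Daa₁))·(D/a)) and G(m,n) = exp(2πi·(|nDaa₁ − m(b+i)|²/(Daa₁))·D(b+i)/(4a)). Then: (i) ∑_{m,n∈ℤ both even} E(m,n) = ∑_{k,ℓ∈ℤ} exp(2πi·(|ℓDaa₁ − k(b+i)|²/(Daa₁))·D(b+i)/a) = Θ(D(b+i)/a); (ii) ∑_{m even, n odd} E(m,n) = e^{−πib/2}·∑_{m even, n odd} G(m,n); (iii) ∑_{m odd, n even} E(m,n) = −e^{−πib/2}·∑_{m odd, n even} G(m,n); (iv) ∑_{m,n both odd} E(m,n) = ∑_{m,n both odd} G(m,n) = Θ_o(D(b+i)/(4a)). -/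

import Mathlib

open Complex

/-- `Θ(τ) = ∑_{m,n∈ℤ} e^{2πi(m²+n²)τ}`. -/
noncomputable def BigTheta (τ : ℂ) : ℂ :=
  ∑' p : ℤ × ℤ, Complex.exp (2 * Real.pi * Complex.I * ((p.1 : ℂ) ^ 2 + (p.2 : ℂ) ^ 2) * τ)

/-- `Θ_o(τ) = ∑_{m,n∈ℤ, m,n odd} e^{2πi(m²+n²)τ}`. -/
noncomputable def BigThetaOdd (τ : ℂ) : ℂ :=
  ∑' p : {p : ℤ × ℤ // Odd p.1 ∧ Odd p.2},
    Complex.exp (2 * Real.pi * Complex.I * ((p.val.1 : ℂ) ^ 2 + (p.val.2 : ℂ) ^ 2) * τ)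

/-- `E(m,n) = (−1)^m·exp(π(mni − |nDaa₁ − m(b+i)|²/(2Daa₁))·(D/a))`. -/
noncomputable def Efun (D a a₁ : ℕ) (b : ℤ) (m n : ℤ) : ℂ :=
  (-1 : ℂ) ^ m *
    Complex.exp ((Real.pi : ℂ) *
      ((m : ℂ) * (n : ℂ) * Complex.I -
        (Complex.normSq ((n : ℂ) * D * a * a₁ - (m : ℂ) * ((b : ℂ) + Complex.I)) : ℂ) /
          (2 * (D : ℂ) * a * a₁)) *
      ((D : ℂ) / (a : ℂ)))

/-- `G(m,n) = exp(2πi·(|nDaa₁ − m(b+i)|²/(Daa₁))·D(b+i)/(4a))`. -/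
noncomputable def Gfun (D a a₁ : ℕ) (b : ℤ) (m n : ℤ) : ℂ :=
  Complex.exp (2 * Real.pi * Complex.I *
    ((Complex.normSq ((n : ℂ) * D * a * a₁ - (m : ℂ) * ((b : ℂ) + Complex.I)) : ℂ) /
      ((D : ℂ) * a * a₁)) *
    ((D : ℂ) * ((b : ℂ) + Complex.I) / (4 * (a : ℂ))))

/-! ### Auxiliary lemmas -/

lemma PTSE.star_dvd_star' {x y : GaussianInt} (h : x ∣ y) : star x ∣ star y := by
  obtain ⟨c, rfl⟩ := h; exact ⟨star c, by rw [star_mul, mul_comm]⟩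

lemma PTSE.exists_gaussian (N b : ℤ) (hN : 0 < N) (hNodd : N % 2 = 1) (hdvd : N ∣ b^2+1) :
    ∃ α : GaussianInt, α.norm = N ∧ ∀ z : GaussianInt, (α ∣ z ↔ N ∣ z.re - b * z.im) := by
  obtain ⟨s, hs⟩ := hdvd
  set J : Ideal GaussianInt :=
    { carrier := {z | N ∣ z.re - b * z.im}
      add_mem' := by
        rintro x y ⟨t, ht⟩ ⟨r, hr⟩
        exact ⟨t + r, by simp only [Zsqrtd.re_add, Zsqrtd.im_add]; linarith⟩
      zero_mem' := ⟨0, by simp⟩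
      smul_mem' := by
        rintro c x ⟨t, ht⟩
        refine ⟨c.re * t - c.im * (x.im * s + b * t), ?_⟩
        show (c * x).re - b * (c * x).im = _
        simp only [Zsqrtd.re_mul, Zsqrtd.im_mul]
        linear_combination (c.re - c.im * b) * ht - c.im * x.im * hs } with hJdef
  have hmem : ∀ z : GaussianInt, z ∈ J ↔ N ∣ z.re - b * z.im := fun z => Iff.rfl
  have hNmem : ((N : ℤ) : GaussianInt) ∈ J := by
    rw [hmem]; simp
  have : Submodule.IsPrincipal J := inferInstance
  set α := Submodule.IsPrincipal.generator J with hα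
  have hspan : Ideal.span {α} = J := Ideal.span_singleton_generator J
  have hchar : ∀ z : GaussianInt, α ∣ z ↔ N ∣ z.re - b * z.im := by
    intro z
    rw [← Ideal.mem_span_singleton, hspan, hmem]
  refine ⟨α, ?_, hchar⟩
  have hαN : α ∣ ((N : ℤ) : GaussianInt) := by rw [hchar]; simp
  have hαbi : α ∣ (⟨b, 1⟩ : GaussianInt) := by rw [hchar]; simp
  have hαmem : N ∣ α.re - b * α.im := (hmem α).mp (hspan ▸ Ideal.mem_span_singleton.mpr dvd_rfl)
  have hNn0 : N ∣ α.norm := by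
    obtain ⟨t, ht⟩ := hαmem
    refine ⟨α.im * α.im * s + 2 * b * α.im * t + N * t * t, ?_⟩
    rw [Zsqrtd.norm_def]
    linear_combination (α.re + b * α.im + N * t) * ht + α.im * α.im * hs
  obtain ⟨γ, hγ⟩ := hNn0
  have hα0 : α ≠ 0 := by
    intro h
    rw [h] at hspan
    have : ((N : ℤ) : GaussianInt) ∈ Ideal.span ({0} : Set GaussianInt) := hspan ▸ hNmem
    rw [Ideal.span_singleton_eq_bot.mpr rfl] at this
    simp only [Ideal.mem_bot] at this
    have : (N : ℤ) = 0 := by exact_mod_cast congrArg Zsqrtd.re this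
    omega
  have hnorm_pos : 0 < α.norm := by
    rcases lt_or_eq_of_le (Zsqrtd.norm_nonneg (by norm_num) α) with h | h
    · exact h
    · exact absurd (Zsqrtd.norm_eq_zero_iff (by norm_num) α |>.mp h.symm) hα0
  have hγpos : 0 < γ := by nlinarith [hnorm_pos, hγ, hN]
  have hsα : (α.norm : GaussianInt) = α * star α := Zsqrtd.norm_eq_mul_conj α
  have hstarN : star ((N:ℤ) : GaussianInt) = ((N:ℤ) : GaussianInt) := by
    ext <;> simp
  have hαstarN : star α ∣ ((N:ℤ) : GaussianInt) := hstarN ▸ PTSE.star_dvd_star' hαN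
  have hstarbi : star (⟨b,1⟩ : GaussianInt) = (⟨b,-1⟩ : GaussianInt) := by
    ext <;> simp
  have hαstarbi : star α ∣ (⟨b,-1⟩ : GaussianInt) := hstarbi ▸ PTSE.star_dvd_star' hαbi
  have hdvdN2 : (α.norm : GaussianInt) ∣ (((N*N : ℤ)) : GaussianInt) := by
    rw [hsα]; push_cast
    exact mul_dvd_mul hαN hαstarN
  have hγN : γ ∣ N := by
    have h1 : α.norm ∣ N * N := by
      have := (Zsqrtd.intCast_dvd (α.norm) (((N*N : ℤ)) : GaussianInt)).mp hdvdN2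
      simpa using this.1
    rw [hγ] at h1
    exact (mul_dvd_mul_iff_left (by omega : N ≠ 0)).mp h1
  have hdvd2N : (α.norm : GaussianInt) ∣ (⟨0, 2*N⟩ : GaussianInt) := by
    have h1 : (α.norm : GaussianInt) ∣ (⟨b,1⟩ : GaussianInt) * ((N:ℤ) : GaussianInt) :=
      hsα ▸ mul_dvd_mul hαbi hαstarN
    have h2 : (α.norm : GaussianInt) ∣ ((N:ℤ) : GaussianInt) * (⟨b,-1⟩ : GaussianInt) :=
      hsα ▸ mul_dvd_mul hαN hαstarbi
    have h3 := dvd_sub h1 h2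
    have he : (⟨b,1⟩ : GaussianInt) * ((N:ℤ) : GaussianInt) -
        ((N:ℤ) : GaussianInt) * (⟨b,-1⟩ : GaussianInt) = (⟨0, 2*N⟩ : GaussianInt) := by
      ext <;> simp [Zsqrtd.re_mul, Zsqrtd.im_mul] <;> ring
    rwa [he] at h3
  have hγ2 : γ ∣ 2 := by
    have h1 : α.norm ∣ 2 * N := by
      have := (Zsqrtd.intCast_dvd (α.norm) (⟨0, 2*N⟩ : GaussianInt)).mp hdvd2N
      simpa using this.2
    rw [hγ, mul_comm 2 N] at h1
    exact (mul_dvd_mul_iff_left (by omega : N ≠ 0)).mp h1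
  have hγodd : γ % 2 = 1 := by
    rcases Int.emod_two_eq_zero_or_one γ with h | h
    · exfalso
      have h2 : (2:ℤ) ∣ γ := Int.dvd_of_emod_eq_zero h
      have := h2.trans hγN
      omega
    · exact h
  have hγle : γ ≤ 2 := Int.le_of_dvd (by norm_num) hγ2
  have hγ1 : γ = 1 := by omega
  rw [hγ, hγ1, mul_one]

lemma PTSE.oddodd_iff_emod4 (x y : ℤ) : (Odd x ∧ Odd y) ↔ (x*x + y*y) % 4 = 2 := by
  constructor
  · rintro ⟨⟨c, rfl⟩, ⟨d, rfl⟩⟩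
    have h : (2*c+1)*(2*c+1) + (2*d+1)*(2*d+1) = 4*(c*c+c+d*d+d) + 2 := by ring
    omega
  · intro h
    rcases Int.even_or_odd x with ⟨c, rfl⟩ | ⟨c, rfl⟩ <;>
      rcases Int.even_or_odd y with ⟨d, rfl⟩ | ⟨d, rfl⟩
    · have : (c+c)*(c+c) + (d+d)*(d+d) = 4*(c*c+d*d) := by ring
      omega
    · have : (c+c)*(c+c) + (2*d+1)*(2*d+1) = 4*(c*c+d*d+d) + 1 := by ring
      omega
    · have : (2*c+1)*(2*c+1) + (d+d)*(d+d) = 4*(c*c+c+d*d) + 1 := by ring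
      omega
    · exact ⟨⟨c, by ring⟩, ⟨d, by ring⟩⟩

lemma PTSE.odd_mul_emod4 {N q : ℤ} (hN : N % 2 = 1) : (N*q) % 4 = 2 ↔ q % 4 = 2 := by
  rw [Int.mul_emod]
  have h1 : N % 4 = 1 ∨ N % 4 = 3 := by omega
  have h2 : q % 4 = 0 ∨ q % 4 = 1 ∨ q % 4 = 2 ∨ q % 4 = 3 := by omega
  rcases h1 with h1 | h1 <;> rcases h2 with h2 | h2 | h2 | h2 <;> rw [h1, h2] <;> norm_num

lemma PTSE.exists_lattice_equiv (N b : ℤ) (hN : 0 < N) (hNodd : N % 2 = 1) (hbe : b % 2 = 0)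
    (hdvd : N ∣ b^2+1) :
    ∃ e : ℤ × ℤ ≃ ℤ × ℤ, ∀ p : ℤ × ℤ,
      ((p.2*N - p.1*b)^2 + p.1^2 = N * ((e p).1^2 + (e p).2^2)) ∧
      ((Odd p.1 ∧ Odd p.2) ↔ (Odd (e p).1 ∧ Odd (e p).2)) := by
  obtain ⟨α, hnorm, hchar⟩ := PTSE.exists_gaussian N b hN hNodd hdvd
  have hN0 : N ≠ 0 := by omega
  have hα0 : α ≠ 0 := by
    intro h
    rw [h, Zsqrtd.norm_zero] at hnorm
    omega
  set T := {z : GaussianInt // N ∣ z.re - b * z.im} with hT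
  let e₁ : ℤ × ℤ ≃ T :=
    { toFun := fun p => ⟨⟨p.2*N - p.1*b, -p.1⟩, ⟨p.2, by ring⟩⟩
      invFun := fun z => (-z.1.im, (z.1.re - b * z.1.im)/N)
      left_inv := by
        rintro ⟨m, n⟩
        simp only [neg_neg]
        refine Prod.ext rfl ?_
        show (n*N - m*b - b * (-m))/N = n
        rw [show n*N - m*b - b * (-m) = n*N by ring, Int.mul_ediv_cancel _ hN0]
      right_inv := by
        rintro ⟨z, hz⟩
        refine Subtype.ext (Zsqrtd.ext ?_ ?_)
        · show ((z.re - b * z.im)/N)*N - (-z.im)*b = z.re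
          rw [Int.ediv_mul_cancel hz]; ring
        · show -(-z.im) = z.im
          ring }
  have hf : ∀ w : GaussianInt, N ∣ (α*w).re - b * (α*w).im := fun w =>
    (hchar (α*w)).mp (dvd_mul_right α w)
  let e₂ : GaussianInt ≃ T := by
    refine Equiv.ofBijective (fun w => ⟨α * w, hf w⟩) ⟨?_, ?_⟩
    · intro w₁ w₂ h
      exact mul_left_cancel₀ hα0 (congrArg Subtype.val h)
    · rintro ⟨z, hz⟩
      obtain ⟨w, hw⟩ := (hchar z).mpr hz
      exact ⟨w, Subtype.ext hw.symm⟩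
  have e₂val : ∀ w : GaussianInt, (e₂ w).1 = α * w := fun w => rfl
  let e₃ : GaussianInt ≃ ℤ × ℤ :=
    { toFun := fun w => (w.re, w.im)
      invFun := fun p => ⟨p.1, p.2⟩
      left_inv := fun w => rfl
      right_inv := fun p => rfl }
  refine ⟨e₁.trans (e₂.symm.trans e₃), fun p => ?_⟩
  set w := e₂.symm (e₁ p) with hw
  have hzw : (e₁ p).1 = α * w := by
    rw [hw, ← e₂val, Equiv.apply_symm_apply]
  have hep : (e₁.trans (e₂.symm.trans e₃)) p = (w.re, w.im) := rfl
  have hz : (e₁ p).1 = ⟨p.2*N - p.1*b, -p.1⟩ := rfl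
  have hnormz : (p.2*N - p.1*b)^2 + p.1^2 = N * ((w.re)^2 + (w.im)^2) := by
    have h1 : ((e₁ p).1).norm = α.norm * w.norm := by rw [hzw, Zsqrtd.norm_mul]
    rw [hz, hnorm] at h1
    have h2 : (⟨p.2*N - p.1*b, -p.1⟩ : GaussianInt).norm = (p.2*N - p.1*b)^2 + p.1^2 := by
      rw [Zsqrtd.norm_def]; ring_nf
    have h3 : w.norm = w.re^2 + w.im^2 := by rw [Zsqrtd.norm_def]; ring_nf
    rw [h2, h3] at h1
    exact h1
  refine ⟨by rw [hep]; exact hnormz, ?_⟩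
  rw [hep]
  have hbN : Odd N := Int.odd_iff.mpr hNodd
  have hbev : Even b := Int.even_iff.mpr hbe
  have hlin : Odd (p.2*N - p.1*b) ↔ Odd p.2 := by
    rw [Int.odd_sub, Int.odd_mul]
    simp [hbN, hbev.mul_left p.1]
  have hp1 : (Odd p.1 ∧ Odd p.2) ↔ (Odd ((e₁ p).1.re) ∧ Odd ((e₁ p).1.im)) := by
    rw [hz]
    show _ ↔ (Odd (p.2*N - p.1*b) ∧ Odd (-p.1))
    rw [hlin, odd_neg, and_comm]
  rw [hp1]
  have hnz : ((e₁ p).1.re) * ((e₁ p).1.re) + ((e₁ p).1.im) * ((e₁ p).1.im) = (e₁ p).1.norm := by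
    rw [Zsqrtd.norm_def]; ring_nf
  have hnw : w.re * w.re + w.im * w.im = w.norm := by
    rw [Zsqrtd.norm_def]; ring_nf
  rw [PTSE.oddodd_iff_emod4, PTSE.oddodd_iff_emod4, hnz, hnw, hzw, Zsqrtd.norm_mul, hnorm,
    PTSE.odd_mul_emod4 hNodd]

lemma PTSE.normSq_cast (D a a₁ : ℕ) (b m n : ℤ) :
    ((Complex.normSq ((n : ℂ) * D * a * a₁ - (m : ℂ) * ((b : ℂ) + Complex.I)) : ℝ) : ℂ) =
      (((n * ((D:ℤ) * a * a₁) - m * b) ^ 2 + m ^ 2 : ℤ) : ℂ) := by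
  have h : (n : ℂ) * D * a * a₁ - (m : ℂ) * ((b : ℂ) + Complex.I) =
      (((n * ((D:ℤ) * a * a₁) - m * b : ℤ) : ℝ) : ℂ) + (((-m : ℤ) : ℝ) : ℂ) * Complex.I := by
    push_cast; ring
  rw [h, Complex.normSq_add_mul_I]
  push_cast; ring

lemma PTSE.hint_int (D a a₁ : ℕ) (b' k₀ m n : ℤ)
    (hk : (b' + b') ^ 2 + 1 = (D:ℤ) * a ^ 2 * a₁ * k₀) :
    2 * (D:ℤ) * ((D:ℤ)*a*a₁) * m * n =
      ((n * ((D:ℤ) * a * a₁) - m * (b'+b')) ^ 2 + m ^ 2) * D * (b'+b') +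
      2 * ((D:ℤ)*a*a₁) * a *
        (m*n*(D:ℤ)^2*a*a₁*k₀ - n^2*(D:ℤ)^2*a₁*b' - m^2*(D:ℤ)*k₀*b') := by
  linear_combination (2*(D:ℤ)*((D:ℤ)*a*a₁)*m*n + (D:ℤ)*m^2*(b'+b') - 4*(D:ℤ)*m^2*b') * hk

lemma PTSE.EG_master (D a a₁ : ℕ) (hD : 0 < D) (ha : 0 < a) (ha₁ : 0 < a₁) (b' k₀ : ℤ)
    (hk : (b' + b') ^ 2 + 1 = (D:ℤ) * a ^ 2 * a₁ * k₀) (m n : ℤ) :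
    Efun D a a₁ (b' + b') m n =
      (-1 : ℂ) ^ (m + (m*n*(D:ℤ)^2*a*a₁*k₀ - n^2*(D:ℤ)^2*a₁*b' - m^2*(D:ℤ)*k₀*b')) *
        Gfun D a a₁ (b' + b') m n := by
  have hD0 : (D : ℂ) ≠ 0 := Nat.cast_ne_zero.mpr hD.ne'
  have ha0 : (a : ℂ) ≠ 0 := Nat.cast_ne_zero.mpr ha.ne'
  have ha₁0 : (a₁ : ℂ) ≠ 0 := Nat.cast_ne_zero.mpr ha₁.ne'
  set c : ℤ := m*n*(D:ℤ)^2*a*a₁*k₀ - n^2*(D:ℤ)^2*a₁*b' - m^2*(D:ℤ)*k₀*b' with hc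
  rw [Efun, Gfun, zpow_add₀ (by norm_num : (-1:ℂ) ≠ 0), mul_assoc ((-1:ℂ)^m)]
  congr 1
  have hpow : ((-1 : ℂ)) ^ c = Complex.exp ((c : ℂ) * ((Real.pi : ℂ) * Complex.I)) := by
    rw [Complex.exp_int_mul, Complex.exp_pi_mul_I]
  rw [hpow, ← Complex.exp_add]
  congr 1
  rw [PTSE.normSq_cast]
  have hintC : 2 * (D:ℂ) * ((D:ℂ)*(a:ℂ)*(a₁:ℂ)) * (m:ℂ) * (n:ℂ) =
      (((n:ℂ) * ((D:ℂ) * a * a₁) - (m:ℂ) * ((b':ℂ)+(b':ℂ))) ^ 2 + (m:ℂ) ^ 2) * (D:ℂ) * ((b':ℂ)+(b':ℂ)) +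
      2 * ((D:ℂ)*(a:ℂ)*(a₁:ℂ)) * (a:ℂ) *
        ((m:ℂ)*(n:ℂ)*(D:ℂ)^2*(a:ℂ)*(a₁:ℂ)*(k₀:ℂ) - (n:ℂ)^2*(D:ℂ)^2*(a₁:ℂ)*(b':ℂ) - (m:ℂ)^2*(D:ℂ)*(k₀:ℂ)*(b':ℂ)) := by
    have h0 := PTSE.hint_int D a a₁ b' k₀ m n hk
    have h1 := congrArg (fun z : ℤ => (z : ℂ)) h0
    push_cast at h1
    linear_combination h1
  have hcC : ((c:ℤ):ℂ) = (m:ℂ)*(n:ℂ)*(D:ℂ)^2*(a:ℂ)*(a₁:ℂ)*(k₀:ℂ) - (n:ℂ)^2*(D:ℂ)^2*(a₁:ℂ)*(b':ℂ) - (m:ℂ)^2*(D:ℂ)*(k₀:ℂ)*(b':ℂ) := by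
    rw [hc]; push_cast; ring
  rw [hcC]
  push_cast
  have hI2 : Complex.I ^ 2 = -1 := Complex.I_sq
  field_simp
  apply mul_left_cancel₀ hD0
  linear_combination (4*Complex.I) * hintC -
    (4*(D:ℂ)*(((n:ℂ) * ((D:ℂ) * a * a₁) - (m:ℂ) * ((b':ℂ)+(b':ℂ))) ^ 2 + (m:ℂ) ^ 2)) * hI2

lemma PTSE.neg_one_zpow_congr {x y : ℤ} (h : Even (x - y)) : (-1:ℂ)^x = (-1:ℂ)^y := by
  have hx : x = y + (x - y) := by ring
  rw [hx, zpow_add₀ (by norm_num : (-1:ℂ) ≠ 0), Even.neg_one_zpow h, mul_one]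
/-- **Lemma (b even)**: partial theta sums of `E(m,n)` over parity classes of `(m,n)`. -/
theorem parity_theta_sums_even (D a a₁ : ℕ) (hD : 0 < D) (ha : 0 < a) (ha₁ : 0 < a₁)
    (b : ℤ) (hbeven : Even b) (hb : ((D : ℤ) * a ^ 2 * a₁) ∣ (b ^ 2 + 1)) :
    ((∑' p : {p : ℤ × ℤ // Even p.1 ∧ Even p.2}, Efun D a a₁ b p.val.1 p.val.2) =
        (∑' p : ℤ × ℤ, Complex.exp (2 * Real.pi * Complex.I *
          ((Complex.normSq ((p.2 : ℂ) * D * a * a₁ - (p.1 : ℂ) * ((b : ℂ) + Complex.I)) : ℂ) /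
            ((D : ℂ) * a * a₁)) *
          ((D : ℂ) * ((b : ℂ) + Complex.I) / (a : ℂ)))) ∧
      (∑' p : {p : ℤ × ℤ // Even p.1 ∧ Even p.2}, Efun D a a₁ b p.val.1 p.val.2) =
        BigTheta ((D : ℂ) * ((b : ℂ) + Complex.I) / (a : ℂ))) ∧
    ((∑' p : {p : ℤ × ℤ // Even p.1 ∧ Odd p.2}, Efun D a a₁ b p.val.1 p.val.2) =
        Complex.exp (-(Real.pi : ℂ) * Complex.I * (b : ℂ) / 2) *
          ∑' p : {p : ℤ × ℤ // Even p.1 ∧ Odd p.2}, Gfun D a a₁ b p.val.1 p.val.2) ∧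
    ((∑' p : {p : ℤ × ℤ // Odd p.1 ∧ Even p.2}, Efun D a a₁ b p.val.1 p.val.2) =
        -Complex.exp (-(Real.pi : ℂ) * Complex.I * (b : ℂ) / 2) *
          ∑' p : {p : ℤ × ℤ // Odd p.1 ∧ Even p.2}, Gfun D a a₁ b p.val.1 p.val.2) ∧
    ((∑' p : {p : ℤ × ℤ // Odd p.1 ∧ Odd p.2}, Efun D a a₁ b p.val.1 p.val.2) =
        (∑' p : {p : ℤ × ℤ // Odd p.1 ∧ Odd p.2}, Gfun D a a₁ b p.val.1 p.val.2) ∧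
      (∑' p : {p : ℤ × ℤ // Odd p.1 ∧ Odd p.2}, Efun D a a₁ b p.val.1 p.val.2) =
        BigThetaOdd ((D : ℂ) * ((b : ℂ) + Complex.I) / (4 * (a : ℂ)))) := by
  obtain ⟨b', rfl⟩ := hbeven
  obtain ⟨k₀, hk⟩ := hb
  -- positivity facts
  have hDZ : 0 < (D:ℤ) := Int.natCast_pos.mpr hD
  have haZ : 0 < (a:ℤ) := Int.natCast_pos.mpr ha
  have ha₁Z : 0 < (a₁:ℤ) := Int.natCast_pos.mpr ha₁
  have hNposZ : 0 < (D:ℤ)*a*a₁ := mul_pos (mul_pos hDZ haZ) ha₁Z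
  -- oddness facts
  have hodds : Odd ((D:ℤ) * a^2 * a₁ * k₀) := ⟨2*b'^2, by linear_combination -hk⟩
  have hDa := Int.odd_mul.mp hodds
  have hDa2 := Int.odd_mul.mp hDa.1
  have hDa3 := Int.odd_mul.mp hDa2.1
  have hDodd : Odd (D:ℤ) := hDa3.1
  have haodd : Odd (a:ℤ) := (Int.odd_pow.mp hDa3.2).resolve_right (by norm_num)
  have ha₁odd : Odd (a₁:ℤ) := hDa2.2
  have hk₀odd : Odd k₀ := hDa.2
  have hNodd : ((D:ℤ)*a*a₁) % 2 = 1 := Int.odd_iff.mp ((hDodd.mul haodd).mul ha₁odd)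
  have hbe2 : (b'+b') % 2 = 0 := by omega
  have hdvdN : ((D:ℤ)*a*a₁) ∣ ((b'+b')^2+1) := ⟨a*k₀, by rw [hk]; ring⟩
  -- termwise lemmas
  have hEG := PTSE.EG_master D a a₁ hD ha ha₁ b' k₀ hk
  have hEE : ∀ m n : ℤ, Even m → Even n →
      Efun D a a₁ (b'+b') m n = Gfun D a a₁ (b'+b') m n := by
    intro m n hm hn
    have hev : Even (m + (m*n*(D:ℤ)^2*a*a₁*k₀ - n^2*(D:ℤ)^2*a₁*b' - m^2*(D:ℤ)*k₀*b')) := by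
      have h1 : Even (m*n*(D:ℤ)^2*a*a₁*k₀) :=
        ((((hm.mul_right n).mul_right _).mul_right _).mul_right _).mul_right _
      have h2 : Even (n^2*(D:ℤ)^2*a₁*b') :=
        ((((by rw [pow_two]; exact hn.mul_left n : Even (n^2))).mul_right _).mul_right _).mul_right _
      have h3 : Even (m^2*(D:ℤ)*k₀*b') :=
        ((((by rw [pow_two]; exact hm.mul_left m : Even (m^2))).mul_right _).mul_right _).mul_right _
      exact hm.add ((h1.sub h2).sub h3)
    rw [hEG m n, Even.neg_one_zpow hev, one_mul]
  have hOO : ∀ m n : ℤ, Odd m → Odd n →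
      Efun D a a₁ (b'+b') m n = Gfun D a a₁ (b'+b') m n := by
    intro m n hm hn
    have hD' := hDodd; have ha' := haodd; have ha₁' := ha₁odd; have hk' := hk₀odd
    have hev : Even ((m + (m*n*(D:ℤ)^2*a*a₁*k₀ - n^2*(D:ℤ)^2*a₁*b' - m^2*(D:ℤ)*k₀*b')) - 0) := by
      rw [← Int.not_even_iff_odd] at hD' ha' ha₁' hk' hm hn
      simp [Int.even_sub, Int.even_add, Int.even_mul, Int.even_pow, hD', ha', ha₁', hk', hm, hn]
      intro hiff
      rcases Int.even_or_odd b' with h | h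
      · exact (Int.not_odd_iff_even.mpr h) (hiff.mpr h)
      · exact (Int.not_even_iff_odd.mpr h) (hiff.mp h)
    rw [sub_zero] at hev
    rw [hEG m n, Even.neg_one_zpow hev, one_mul]
  have hEO : ∀ m n : ℤ, Even m → Odd n →
      Efun D a a₁ (b'+b') m n = (-1:ℂ)^b' * Gfun D a a₁ (b'+b') m n := by
    intro m n hm hn
    have hD' := hDodd; have ha' := haodd; have ha₁' := ha₁odd; have hk' := hk₀odd
    have hev : Even ((m + (m*n*(D:ℤ)^2*a*a₁*k₀ - n^2*(D:ℤ)^2*a₁*b' - m^2*(D:ℤ)*k₀*b')) - b') := by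
      rw [← Int.not_even_iff_odd] at hD' ha' ha₁' hk' hn
      simp [Int.even_sub, Int.even_add, Int.even_mul, Int.even_pow, hD', ha', ha₁', hk', hm, hn]
    rw [hEG m n, PTSE.neg_one_zpow_congr hev]
  have hOE : ∀ m n : ℤ, Odd m → Even n →
      Efun D a a₁ (b'+b') m n = (-(-1:ℂ)^b') * Gfun D a a₁ (b'+b') m n := by
    intro m n hm hn
    have hD' := hDodd; have ha' := haodd; have ha₁' := ha₁odd; have hk' := hk₀odd
    have hev : Even ((m + (m*n*(D:ℤ)^2*a*a₁*k₀ - n^2*(D:ℤ)^2*a₁*b' - m^2*(D:ℤ)*k₀*b')) - (b'+1)) := by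
      rw [← Int.not_even_iff_odd] at hD' ha' ha₁' hk' hm
      simp [Int.even_sub, Int.even_add, Int.even_mul, Int.even_pow, hD', ha', ha₁', hk', hm, hn]
    rw [hEG m n, PTSE.neg_one_zpow_congr hev, zpow_add₀ (by norm_num : (-1:ℂ) ≠ 0), zpow_one]
    ring
  have hconst : Complex.exp (-(Real.pi:ℂ) * Complex.I * ((b'+b' : ℤ):ℂ) / 2) = (-1:ℂ)^b' := by
    have h1 : -(Real.pi:ℂ) * Complex.I * ((b'+b' : ℤ):ℂ) / 2 =
        ((-b' : ℤ):ℂ) * ((Real.pi:ℂ) * Complex.I) := by push_cast; ring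
    rw [h1, Complex.exp_int_mul, Complex.exp_pi_mul_I, zpow_neg]
    rcases Int.even_or_odd b' with h | h
    · rw [Even.neg_one_zpow h]; norm_num
    · rw [Odd.neg_one_zpow h]; norm_num
  -- the lattice equivalence
  obtain ⟨e, he⟩ := PTSE.exists_lattice_equiv ((D:ℤ)*a*a₁) (b'+b') hNposZ hNodd hbe2 hdvdN
  have hD0 : (D : ℂ) ≠ 0 := Nat.cast_ne_zero.mpr hD.ne'
  have ha0 : (a : ℂ) ≠ 0 := Nat.cast_ne_zero.mpr ha.ne'
  have ha₁0 : (a₁ : ℂ) ≠ 0 := Nat.cast_ne_zero.mpr ha₁.ne'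
  -- halving equivalence
  let eH : ℤ × ℤ ≃ {p : ℤ × ℤ // Even p.1 ∧ Even p.2} :=
    { toFun := fun q => ⟨(2*q.1, 2*q.2), ⟨⟨q.1, by ring⟩, ⟨q.2, by ring⟩⟩⟩
      invFun := fun p => (p.1.1/2, p.1.2/2)
      left_inv := by
        rintro ⟨x, y⟩
        refine Prod.ext ?_ ?_
        · show (2*x)/2 = x; omega
        · show (2*y)/2 = y; omega
      right_inv := by
        rintro ⟨p, hp1, hp2⟩
        refine Subtype.ext (Prod.ext ?_ ?_)
        · show 2*(p.1/2) = p.1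
          obtain ⟨c, hc⟩ := hp1; omega
        · show 2*(p.2/2) = p.2
          obtain ⟨c, hc⟩ := hp2; omega }
  have hG2 : ∀ k l : ℤ, Gfun D a a₁ (b'+b') (2*k) (2*l) =
      Complex.exp (2 * Real.pi * Complex.I *
        ((Complex.normSq ((l:ℂ) * D * a * a₁ - (k:ℂ) * (((b'+b' : ℤ):ℂ) + Complex.I)) : ℂ) /
          ((D:ℂ)*a*a₁)) * ((D:ℂ)*(((b'+b' : ℤ):ℂ)+Complex.I)/(a:ℂ))) := by
    intro k l
    rw [Gfun, PTSE.normSq_cast, PTSE.normSq_cast]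
    congr 1
    rw [show ((2*l * ((D:ℤ)*a*a₁) - 2*k*(b'+b'))^2 + (2*k)^2 : ℤ) =
        4*((l*((D:ℤ)*a*a₁) - k*(b'+b'))^2 + k^2) from by ring]
    push_cast
    field_simp
  have hF : ∀ p : ℤ × ℤ,
      Complex.exp (2 * Real.pi * Complex.I *
        ((Complex.normSq ((p.2:ℂ) * D * a * a₁ - (p.1:ℂ) * (((b'+b':ℤ):ℂ) + Complex.I)) : ℂ) /
          ((D:ℂ)*a*a₁)) * ((D:ℂ)*(((b'+b':ℤ):ℂ)+Complex.I)/(a:ℂ))) =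
      Complex.exp (2 * Real.pi * Complex.I * (((e p).1:ℂ)^2 + ((e p).2:ℂ)^2) *
        ((D:ℂ)*(((b'+b':ℤ):ℂ)+Complex.I)/(a:ℂ))) := by
    intro p
    rw [PTSE.normSq_cast]
    congr 1
    rw [show ((p.2*((D:ℤ)*a*a₁) - p.1*(b'+b'))^2 + p.1^2 : ℤ) =
        ((D:ℤ)*a*a₁) * ((e p).1^2 + (e p).2^2) from (he p).1]
    push_cast
    all_goals field_simp
    all_goals ring
  have hi1 : (∑' p : {p : ℤ × ℤ // Even p.1 ∧ Even p.2}, Efun D a a₁ (b'+b') p.val.1 p.val.2) =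
      (∑' p : ℤ × ℤ, Complex.exp (2 * Real.pi * Complex.I *
        ((Complex.normSq ((p.2 : ℂ) * D * a * a₁ - (p.1 : ℂ) * (((b'+b':ℤ) : ℂ) + Complex.I)) : ℂ) /
          ((D : ℂ) * a * a₁)) *
        ((D : ℂ) * (((b'+b':ℤ) : ℂ) + Complex.I) / (a : ℂ)))) := by
    rw [tsum_congr (fun p : {p : ℤ × ℤ // Even p.1 ∧ Even p.2} =>
      hEE p.val.1 p.val.2 p.2.1 p.2.2)]
    rw [← Equiv.tsum_eq eH (fun p : {p : ℤ × ℤ // Even p.1 ∧ Even p.2} =>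
      Gfun D a a₁ (b'+b') p.val.1 p.val.2)]
    exact tsum_congr fun q => hG2 q.1 q.2
  have hi2 : (∑' p : ℤ × ℤ, Complex.exp (2 * Real.pi * Complex.I *
        ((Complex.normSq ((p.2 : ℂ) * D * a * a₁ - (p.1 : ℂ) * (((b'+b':ℤ) : ℂ) + Complex.I)) : ℂ) /
          ((D : ℂ) * a * a₁)) *
        ((D : ℂ) * (((b'+b':ℤ) : ℂ) + Complex.I) / (a : ℂ)))) =
      BigTheta ((D : ℂ) * (((b'+b':ℤ) : ℂ) + Complex.I) / (a : ℂ)) := by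
    rw [BigTheta]
    rw [← Equiv.tsum_eq e (fun q : ℤ × ℤ => Complex.exp (2 * Real.pi * Complex.I *
      ((q.1 : ℂ)^2 + (q.2 : ℂ)^2) * ((D : ℂ) * (((b'+b':ℤ) : ℂ) + Complex.I) / (a : ℂ))))]
    exact tsum_congr fun p => hF p
  have hoo1 : (∑' p : {p : ℤ × ℤ // Odd p.1 ∧ Odd p.2}, Efun D a a₁ (b'+b') p.val.1 p.val.2) =
      (∑' p : {p : ℤ × ℤ // Odd p.1 ∧ Odd p.2}, Gfun D a a₁ (b'+b') p.val.1 p.val.2) :=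
    tsum_congr fun p => hOO p.val.1 p.val.2 p.2.1 p.2.2
  have hoo2 : (∑' p : {p : ℤ × ℤ // Odd p.1 ∧ Odd p.2}, Gfun D a a₁ (b'+b') p.val.1 p.val.2) =
      BigThetaOdd ((D : ℂ) * (((b'+b':ℤ) : ℂ) + Complex.I) / (4 * (a : ℂ))) := by
    rw [BigThetaOdd]
    rw [← Equiv.tsum_eq (e.subtypeEquiv (fun p => (he p).2))
      (fun q : {p : ℤ × ℤ // Odd p.1 ∧ Odd p.2} => Complex.exp (2 * Real.pi * Complex.I *
        ((q.val.1 : ℂ)^2 + (q.val.2 : ℂ)^2) *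
        ((D : ℂ) * (((b'+b':ℤ) : ℂ) + Complex.I) / (4 * (a : ℂ)))))]
    refine tsum_congr fun p => ?_
    show Gfun D a a₁ (b'+b') p.val.1 p.val.2 = _
    rw [Gfun, PTSE.normSq_cast]
    congr 1
    rw [show ((p.val.2*((D:ℤ)*a*a₁) - p.val.1*(b'+b'))^2 + p.val.1^2 : ℤ) =
        ((D:ℤ)*a*a₁) * ((e p.val).1^2 + (e p.val).2^2) from (he p.val).1]
    push_cast
    all_goals field_simp
    simp only [Equiv.subtypeEquiv_apply]
    all_goals ring
  refine ⟨⟨hi1, hi1.trans hi2⟩, ?_, ?_, hoo1, hoo1.trans hoo2⟩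
  · rw [hconst]
    rw [tsum_congr (fun p : {p : ℤ × ℤ // Even p.1 ∧ Odd p.2} =>
      hEO p.val.1 p.val.2 p.2.1 p.2.2)]
    exact tsum_mul_left
  · rw [hconst]
    rw [tsum_congr (fun p : {p : ℤ × ℤ // Odd p.1 ∧ Even p.2} =>
      hOE p.val.1 p.val.2 p.2.1 p.2.2)]
    exact tsum_mul_left
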